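/- Let X be a metric space with asdim X ≤ n. Then X admits an (n+1)-precode structure for asymptotic dimension: there exists a sequence 𝒰₀, 𝒰₁, … of uniformly bounded covers of X such that (a) for every i and every U ∈ 𝒰ᵢ there exists exactly one V ∈ 𝒰ᵢ₊₁ with U ⊆ V, (b) every bounded subset of X is contained in some member of some 𝒰ᵢ, and (c) for every r < ∞ there exists i such that the r-multiplicity of 𝒰ᵢ is at most n+1. -/

import Mathlib

open Metric Set
open scoped Classical

/-- `𝒰` is an `r`-disjoint family of subsets: any two points lying in different
members are at distance `> r`. -/
def RDisjoint {X : Type*} [PseudoMetricSpace X] (r : ℝ) (𝒰 : Set (Set X)) : Prop :=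
  ∀ U ∈ 𝒰, ∀ V ∈ 𝒰, U ≠ V → ∀ x ∈ U, ∀ y ∈ V, r < dist x y

/-- The asymptotic dimension of `X` is at most `n`. -/
def AsdimLE (X : Type*) [PseudoMetricSpace X] (n : ℕ) : Prop :=
  ∀ r : ℝ, ∃ (D : ℝ) (𝒰 : Fin (n + 1) → Set (Set X)),
    (∀ i, RDisjoint r (𝒰 i)) ∧
    (∀ i, ∀ U ∈ 𝒰 i, EMetric.diam U ≤ ENNReal.ofReal D) ∧
    (⋃ i, ⋃₀ 𝒰 i) = Set.univ

/-- The asymptotic Assouad-Nagata dimension of `X` is at most `n`. -/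
def ANasdimLE (X : Type*) [PseudoMetricSpace X] (n : ℕ) : Prop :=
  ∃ c b : ℝ, 0 ≤ c ∧ 0 ≤ b ∧ ∀ r : ℝ, ∃ 𝒰 : Fin (n + 1) → Set (Set X),
    (∀ i, RDisjoint r (𝒰 i)) ∧
    (∀ i, ∀ U ∈ 𝒰 i, EMetric.diam U ≤ ENNReal.ofReal (c * r + b)) ∧
    (⋃ i, ⋃₀ 𝒰 i) = Set.univ

/-- The Assouad-Nagata dimension of `X` is at most `n`. -/
def ANdimLE (X : Type*) [PseudoMetricSpace X] (n : ℕ) : Prop :=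
  ∃ c : ℝ, 0 ≤ c ∧ ∀ r : ℝ, ∃ 𝒰 : Fin (n + 1) → Set (Set X),
    (∀ i, RDisjoint r (𝒰 i)) ∧
    (∀ i, ∀ U ∈ 𝒰 i, EMetric.diam U ≤ ENNReal.ofReal (c * r)) ∧
    (⋃ i, ⋃₀ 𝒰 i) = Set.univ

/-- `𝒰` covers `X`. -/
def IsCover {X : Type*} (𝒰 : Set (Set X)) : Prop := ⋃₀ 𝒰 = Set.univ

/-- `mesh 𝒰 ≤ M`: every member of `𝒰` has diameter at most `M`. -/
def MeshLE {X : Type*} [PseudoMetricSpace X] (𝒰 : Set (Set X)) (M : ℝ) : Prop :=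
  ∀ U ∈ 𝒰, EMetric.diam U ≤ ENNReal.ofReal M

/-- `𝒰` is uniformly bounded. -/
def UniformlyBounded {X : Type*} [PseudoMetricSpace X] (𝒰 : Set (Set X)) : Prop :=
  ∃ M : ℝ, MeshLE 𝒰 M

/-- The `s`-multiplicity of `𝒰` is at most `m`: no subset of diameter at most `s`
meets more than `m` members of `𝒰`. -/
def MultLE {X : Type*} [PseudoMetricSpace X] (𝒰 : Set (Set X)) (s : ℝ) (m : ℕ) : Prop :=
  ∀ B : Set X, EMetric.diam B ≤ ENNReal.ofReal s →
    {U | U ∈ 𝒰 ∧ (U ∩ B).Nonempty}.encard ≤ (m : ℕ∞)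

/-- The `r`-multiplicity of `𝒰`, as an extended natural number. -/
noncomputable def rMult {X : Type*} [PseudoMetricSpace X] (𝒰 : Set (Set X)) (r : ℝ) : ℕ∞ :=
  ⨆ B ∈ {B : Set X | EMetric.diam B ≤ ENNReal.ofReal r},
    {U | U ∈ 𝒰 ∧ (U ∩ B).Nonempty}.encard

/-- The (pointwise) multiplicity of `𝒰`, as an extended natural number. -/
noncomputable def Mult {X : Type*} (𝒰 : Set (Set X)) : ℕ∞ :=
  ⨆ x : X, {U | U ∈ 𝒰 ∧ x ∈ U}.encard

/-- The Lebesgue number of `𝒰` is at least `t`: every subset of diameter at most `t`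
is contained in some member of `𝒰`. -/
def LebesgueGE {X : Type*} [PseudoMetricSpace X] (𝒰 : Set (Set X)) (t : ℝ) : Prop :=
  ∀ B : Set X, EMetric.diam B ≤ ENNReal.ofReal t → ∃ U ∈ 𝒰, B ⊆ U

/-- `f` is bornologous. -/
def Bornologous {X Y : Type*} [PseudoMetricSpace X] [PseudoMetricSpace Y] (f : X → Y) : Prop :=
  ∃ δ : ℝ → ℝ, ∀ x x' : X, dist (f x) (f x') ≤ δ (dist x x')

/-- `f` is (metrically) proper: preimages of bounded sets are bounded. -/
def MetricProper {X Y : Type*} [PseudoMetricSpace X] [PseudoMetricSpace Y] (f : X → Y) : Prop :=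
  ∀ B : Set Y, Bornology.IsBounded B → Bornology.IsBounded (f ⁻¹' B)

/-- `f` is a coarse map. -/
def CoarseMap {X Y : Type*} [PseudoMetricSpace X] [PseudoMetricSpace Y] (f : X → Y) : Prop :=
  Bornologous f ∧ MetricProper f

/-- `f` is a Lipschitz map. -/
def LipschitzMap {X Y : Type*} [PseudoMetricSpace X] [PseudoMetricSpace Y] (f : X → Y) : Prop :=
  ∃ c : ℝ, 0 < c ∧ ∀ x x' : X, dist (f x) (f x') ≤ c * dist x x'

/-- `f` is asymptotically Lipschitz. -/
def AsympLipschitz {X Y : Type*} [PseudoMetricSpace X] [PseudoMetricSpace Y] (f : X → Y) : Prop :=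
  ∃ c b : ℝ, 0 < c ∧ 0 < b ∧ ∀ x x' : X, dist (f x) (f x') ≤ c * dist x x' + b

/-- Property (B)ₙ of a map `f : X → Y`. -/
def PropertyB {X Y : Type*} [PseudoMetricSpace X] [PseudoMetricSpace Y]
    (f : X → Y) (n : ℕ) : Prop :=
  ∀ r : ℝ, ∃ d : ℝ, ∀ B : Set Y, EMetric.diam B ≤ ENNReal.ofReal r →
    ∃ A : Fin n → Set X, f ⁻¹' B = ⋃ i, A i ∧ ∀ i, EMetric.diam (A i) ≤ ENNReal.ofReal d

/-- Property (C)ₙ of a map `f : X → Y`. -/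
def PropertyC {X Y : Type*} [PseudoMetricSpace X] [PseudoMetricSpace Y]
    (f : X → Y) (n : ℕ) : Prop :=
  ∃ c d : ℝ, 0 < c ∧ 0 < d ∧ ∀ r : ℝ, ∀ B : Set Y, EMetric.diam B ≤ ENNReal.ofReal r →
    ∃ A : Fin n → Set X, f ⁻¹' B = ⋃ i, A i ∧
      ∀ i, EMetric.diam (A i) ≤ ENNReal.ofReal (c * r + d)

/-- Property (B) (of Miyata-Yoshimura). -/
def PropertyB0 {X Y : Type*} [PseudoMetricSpace X] [PseudoMetricSpace Y] (f : X → Y) : Prop :=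
  ∃ d : ℝ, 0 < d ∧ ∀ r : ℝ, 0 < r → ∀ B : Set Y, EMetric.diam B ≤ ENNReal.ofReal r →
    ∃ A : Set X, EMetric.diam A ≤ ENNReal.ofReal (d * r) ∧ f '' A = B

/-- Two maps are close. -/
def CloseMaps {X Y : Type*} [PseudoMetricSpace Y] (f g : X → Y) : Prop :=
  ∃ S : ℝ, ∀ x : X, dist (f x) (g x) ≤ S

/-- `f` is a coarse equivalence. -/
def CoarseEquivalence {X Y : Type*} [PseudoMetricSpace X] [PseudoMetricSpace Y]
    (f : X → Y) : Prop :=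
  CoarseMap f ∧ ∃ g : Y → X, CoarseMap g ∧ CloseMaps (f ∘ g) id ∧ CloseMaps (g ∘ f) id

/-- `f` is a quasi-isometric map. -/
def QuasiIsometric {X Y : Type*} [PseudoMetricSpace X] [PseudoMetricSpace Y]
    (f : X → Y) : Prop :=
  (∃ c b : ℝ, 0 < c ∧ 0 < b ∧ ∀ x x' : X,
      (1 / c) * dist x x' - b ≤ dist (f x) (f x') ∧ dist (f x) (f x') ≤ c * dist x x' + b) ∧
  ∃ R : ℝ, 0 < R ∧ ∀ y : Y, ∃ x : X, dist y (f x) ≤ R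

/-- `d` satisfies the ultrametric (strong triangle) inequality. -/
def IsUltrametric {X : Type*} (d : X → X → ℝ) : Prop :=
  ∀ x y z : X, d x z ≤ max (d x y) (d y z)

/-- The distance function of a metric-space structure. -/
def distOf {Z : Type*} (m : MetricSpace Z) : Z → Z → ℝ :=
  m.toPseudoMetricSpace.toDist.dist

/-- The sum metric on the product of two metric spaces. -/
noncomputable def sumMetric (X Y : Type*) [MetricSpace X] [MetricSpace Y] :
    MetricSpace (X × Y) where
  dist p q := dist p.1 q.1 + dist p.2 q.2
  dist_self p := by simp
  dist_comm p q := by simp [dist_comm]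
  dist_triangle p q r := by
    have h1 := dist_triangle p.1 q.1 r.1
    have h2 := dist_triangle p.2 q.2 r.2
    try dsimp only
    linarith
  eq_of_dist_eq_zero := by
    intro p q h
    try dsimp only at h
    have h1 : dist p.1 q.1 = 0 :=
      le_antisymm (by linarith [dist_nonneg (x := p.2) (y := q.2)]) dist_nonneg
    have h2 : dist p.2 q.2 = 0 :=
      le_antisymm (by linarith [dist_nonneg (x := p.1) (y := q.1)]) dist_nonneg
    exact Prod.ext (dist_eq_zero.mp h1) (dist_eq_zero.mp h2)

/-- `p(V, W)`: the least `k` such that `V ∪ W` is contained in a member of `𝒰ₖ`. -/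
noncomputable def pVal {X : Type*} (𝒰 : ℕ → Set (Set X)) (V W : ↥(𝒰 0)) : ℕ :=
  sInf {k : ℕ | ∃ U ∈ 𝒰 k, (V : Set X) ∪ (W : Set X) ⊆ U}

/-- The ultrametric `d_B` (base `3`) on `𝒰₀` determined by a precode structure. -/
noncomputable def dB {X : Type*} (𝒰 : ℕ → Set (Set X)) (V W : ↥(𝒰 0)) : ℝ :=
  if V = W then 0 else 3 ^ pVal 𝒰 V W

/-- The ultrametric `d_C` (base `a`) on `𝒰₀` determined by a precode structure. -/
noncomputable def dC {X : Type*} (𝒰 : ℕ → Set (Set X)) (a : ℝ) (V W : ↥(𝒰 0)) : ℝ :=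
  if V = W then 0 else a ^ pVal 𝒰 V W

/-! The covers are the classes of an increasing sequence of equivalence relations on `X`, starting
from equality; for partitions the parent of a class is automatically unique. Given the `i`-th
relation, whose classes are uniformly bounded, thickening the members of the `n + 1` families
provided by `asdim X ≤ n` gives a uniformly bounded cover `𝒱` with Lebesgue number at least `s`
and `s`-multiplicity at most `n + 1`, for `s` as large as needed. Send each class to a member of
`𝒱` containing it, all classes meeting `closedBall x₀ i` to one and the same member, and glue the
classes with the same image: the new classes lie in members of `𝒱`, so they are uniformly bounded
with `i`-multiplicity at most `n + 1`, and one of them contains `closedBall x₀ i`. -/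

/-- An `m`-precode structure for asymptotic dimension. -/
def IsPrecode {X : Type*} [PseudoMetricSpace X] (𝒰 : ℕ → Set (Set X)) (m : ℕ) : Prop :=
  (∀ i, IsCover (𝒰 i)) ∧ (∀ i, UniformlyBounded (𝒰 i)) ∧
    (∀ i, ∀ U ∈ 𝒰 i, ∃! V, V ∈ 𝒰 (i + 1) ∧ U ⊆ V) ∧
    (∀ D : Set X, Bornology.IsBounded D → ∃ i, ∃ U ∈ 𝒰 i, D ⊆ U) ∧
    (∀ r : ℝ, ∃ i, MultLE (𝒰 i) r m)

section

variable {X : Type*} [PseudoMetricSpace X]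

lemma dist_le_of_ediam_le {B : Set X} {s : ℝ} {x y : X} (hs : 0 ≤ s)
    (hB : ediam B ≤ ENNReal.ofReal s) (hx : x ∈ B) (hy : y ∈ B) : dist x y ≤ s :=
  (edist_le_ofReal hs).1 ((edist_le_ediam_of_mem hx hy).trans hB)

lemma MeshLE.mono {𝒰 : Set (Set X)} {M M' : ℝ} (h : MeshLE 𝒰 M) (hM : M ≤ M') : MeshLE 𝒰 M' :=
  fun U hU => (h U hU).trans (ENNReal.ofReal_le_ofReal hM)

lemma LebesgueGE.mono {𝒰 : Set (Set X)} {t t' : ℝ} (h : LebesgueGE 𝒰 t) (ht : t' ≤ t) :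
    LebesgueGE 𝒰 t' :=
  fun B hB => h B (hB.trans (ENNReal.ofReal_le_ofReal ht))

lemma MultLE.mono {𝒰 : Set (Set X)} {s s' : ℝ} {m : ℕ} (h : MultLE 𝒰 s m) (hs : s' ≤ s) :
    MultLE 𝒰 s' m :=
  fun B hB => h B (hB.trans (ENNReal.ofReal_le_ofReal hs))

end

section Thickening

variable {X : Type*} [PseudoMetricSpace X] {𝒰 : Set (Set X)} {δ s : ℝ}

lemma meshLE_image_thickening {D : ℝ} (h : MeshLE 𝒰 D) (hD : 0 ≤ D) :
    MeshLE (thickening δ '' 𝒰) (D + 2 * δ) := by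
  rintro _ ⟨U, hU, rfl⟩
  refine ediam_le_of_forall_dist_le fun x hx y hy => ?_
  obtain ⟨u, hu, hxu⟩ := mem_thickening_iff.1 hx
  obtain ⟨v, hv, hyv⟩ := mem_thickening_iff.1 hy
  have huv := dist_le_of_ediam_le hD (h U hU) hu hv
  linarith [dist_triangle4 x u v y, dist_comm v y]

lemma lebesgueGE_image_thickening [Nonempty X] (h : IsCover 𝒰) (hs : 0 ≤ s) (hsδ : s < δ) :
    LebesgueGE (thickening δ '' 𝒰) s := by
  intro B hB
  rcases B.eq_empty_or_nonempty with rfl | ⟨x, hx⟩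
  · obtain ⟨U, hU, -⟩ := h ▸ mem_univ (Classical.arbitrary X)
    exact ⟨_, mem_image_of_mem _ hU, empty_subset _⟩
  · obtain ⟨U, hU, hxU⟩ := h ▸ mem_univ x
    exact ⟨_, mem_image_of_mem _ hU, fun y hy =>
      mem_thickening_iff.2 ⟨x, hxU, (dist_le_of_ediam_le hs hB hy hx).trans_lt hsδ⟩⟩

lemma RDisjoint.subsingleton_image_thickening_inter_nonempty {r : ℝ} (h : RDisjoint r 𝒰)
    (hr : 2 * δ + s ≤ r) (hs : 0 ≤ s) {B : Set X} (hB : ediam B ≤ ENNReal.ofReal s) :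
    {V | V ∈ thickening δ '' 𝒰 ∧ (V ∩ B).Nonempty}.Subsingleton := by
  rintro _ ⟨⟨U, hU, rfl⟩, x, hxU, hxB⟩ _ ⟨⟨U', hU', rfl⟩, x', hxU', hxB'⟩
  by_contra hne
  obtain ⟨u, hu, hxu⟩ := mem_thickening_iff.1 hxU
  obtain ⟨u', hu', hxu'⟩ := mem_thickening_iff.1 hxU'
  have hxx' := dist_le_of_ediam_le hs hB hxB hxB'
  have := h U hU U' hU' (fun hUU' => hne (hUU' ▸ rfl)) u hu u' hu'
  linarith [dist_triangle4 u x x' u', dist_comm u x]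

lemma multLE_image_thickening_iUnion {k : ℕ} {𝒰 : Fin k → Set (Set X)} {r : ℝ}
    (h : ∀ i, RDisjoint r (𝒰 i)) (hr : 2 * δ + s ≤ r) (hs : 0 ≤ s) :
    MultLE (thickening δ '' ⋃ i, 𝒰 i) s k := by
  intro B hB
  have hsub : {V | V ∈ thickening δ '' ⋃ i, 𝒰 i ∧ (V ∩ B).Nonempty} ⊆
      ⋃ i, {V | V ∈ thickening δ '' 𝒰 i ∧ (V ∩ B).Nonempty} := by
    rintro _ ⟨⟨U, hU, rfl⟩, hB⟩
    obtain ⟨i, hUi⟩ := mem_iUnion.1 hU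
    exact mem_iUnion.2 ⟨i, mem_image_of_mem _ hUi, hB⟩
  calc _ ≤ ∑ i, {V | V ∈ thickening δ '' 𝒰 i ∧ (V ∩ B).Nonempty}.encard :=
        (encard_mono hsub).trans (encard_iUnion_le_of_fintype _)
    _ ≤ ∑ _i : Fin k, 1 := Finset.sum_le_sum fun i _ =>
        encard_le_one_iff_subsingleton.2
          ((h i).subsingleton_image_thickening_inter_nonempty hr hs hB)
    _ = k := by simp

end Thickening

lemma AsdimLE.exists_cover_lebesgueGE_multLE {X : Type*} [PseudoMetricSpace X] [Nonempty X]
    {n : ℕ} (h : AsdimLE X n) {s : ℝ} (hs : 0 ≤ s) :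
    ∃ 𝒱 : Set (Set X), UniformlyBounded 𝒱 ∧ LebesgueGE 𝒱 s ∧ MultLE 𝒱 s (n + 1) := by
  obtain ⟨D, 𝒰, hdisj, hdiam, hcov⟩ := h (3 * s + 2)
  have hmesh : MeshLE (⋃ i, 𝒰 i) (max D 0) := by
    intro U hU
    obtain ⟨i, hUi⟩ := mem_iUnion.1 hU
    exact (hdiam i U hUi).trans (ENNReal.ofReal_le_ofReal (le_max_left _ _))
  have hcov' : IsCover (⋃ i, 𝒰 i) := by rwa [_root_.IsCover, sUnion_iUnion]
  exact ⟨_, ⟨_, meshLE_image_thickening hmesh (le_max_right _ _)⟩,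
    lebesgueGE_image_thickening hcov' hs (by linarith : s < s + 1),
    multLE_image_thickening_iUnion hdisj (by linarith) hs⟩

lemma Setoid.existsUnique_superset_mem_classes {X : Type*} {r r' : Setoid X} (hle : r ≤ r')
    {U : Set X} (hU : U ∈ r.classes) : ∃! V, V ∈ r'.classes ∧ U ⊆ V := by
  obtain ⟨y, rfl⟩ := hU
  refine ⟨{x | r' x y}, ⟨r'.mem_classes y, fun x hx => hle hx⟩, ?_⟩
  rintro V ⟨hV, hUV⟩
  exact Setoid.eq_of_mem_classes hV (hUV (r.refl y)) (r'.mem_classes y) (r'.refl y)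

section Coarsening

variable {X : Type*} [PseudoMetricSpace X] {𝒱 : Set (Set X)} {Φ : X → Set X}

lemma uniformlyBounded_classes_bot : UniformlyBounded (⊥ : Setoid X).classes := by
  refine ⟨0, ?_⟩
  rintro _ ⟨y, rfl⟩
  refine ediam_le_of_forall_dist_le fun x (hx : x = y) z (hz : z = y) => ?_
  simp [hx, hz]

lemma meshLE_classes_ker (hΦ : ∀ x, Φ x ∈ 𝒱) (hmem : ∀ x, x ∈ Φ x) {M : ℝ} (h : MeshLE 𝒱 M) :
    MeshLE (Setoid.ker Φ).classes M := by
  rintro _ ⟨y, rfl⟩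
  exact (ediam_mono fun x (hx : Φ x = Φ y) => hx ▸ hmem x).trans (h _ (hΦ y))

lemma multLE_classes_ker (hΦ : ∀ x, Φ x ∈ 𝒱) (hmem : ∀ x, x ∈ Φ x) {s : ℝ} {m : ℕ}
    (h : MultLE 𝒱 s m) : MultLE (Setoid.ker Φ).classes s m := by
  intro B hB
  have hsub : {C | C ∈ (Setoid.ker Φ).classes ∧ (C ∩ B).Nonempty} ⊆
      (fun V => Φ ⁻¹' {V}) '' {V | V ∈ 𝒱 ∧ (V ∩ B).Nonempty} := by
    rintro _ ⟨⟨y, rfl⟩, x, hx : Φ x = Φ y, hxB⟩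
    exact ⟨Φ y, ⟨hΦ y, x, hx ▸ hmem x, hxB⟩, rfl⟩
  exact (encard_mono hsub).trans ((encard_image_le _ _).trans (h B hB))

lemma LebesgueGE.exists_coarsening_map {r : Setoid X} {m R : ℝ}
    (hleb : LebesgueGE 𝒱 (2 * (R + m))) (hr : MeshLE r.classes m) (hm : 0 ≤ m) (hR : 0 ≤ R)
    (x₀ : X) :
    ∃ Φ : X → Set X, (∀ x, Φ x ∈ 𝒱) ∧ (∀ x, x ∈ Φ x) ∧ r ≤ Setoid.ker Φ ∧
      ∀ x ∈ closedBall x₀ R, Φ x = Φ x₀ := by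
  obtain ⟨V₀, hV₀, hballV₀⟩ := hleb (closedBall x₀ (R + m)) <|
    ediam_le_of_forall_dist_le fun x hx y hy => by
      linarith [dist_triangle_right x y x₀, mem_closedBall.1 hx, mem_closedBall.1 hy]
  have hcls : ∀ C ∈ r.classes, ∃ V ∈ 𝒱, C ⊆ V ∧ ((C ∩ closedBall x₀ R).Nonempty → V = V₀) := by
    intro C hC
    by_cases hCB : (C ∩ closedBall x₀ R).Nonempty
    · refine ⟨V₀, hV₀, fun x hx => hballV₀ (mem_closedBall.2 ?_), fun _ => rfl⟩
      obtain ⟨z, hzC, hzB⟩ := hCB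
      have hxz := dist_le_of_ediam_le hm (hr C hC) hx hzC
      linarith [dist_triangle x z x₀, mem_closedBall.1 hzB]
    · obtain ⟨V, hV, hCV⟩ := hleb C ((hr C hC).trans (ENNReal.ofReal_le_ofReal (by linarith)))
      exact ⟨V, hV, hCV, fun h => absurd h hCB⟩
  choose! ψ hψ𝒱 hψsub hψball using hcls
  refine ⟨fun x => ψ {y | r y x}, fun x => hψ𝒱 _ (r.mem_classes x),
    fun x => hψsub _ (r.mem_classes x) (r.refl x), fun x y hxy => ?_, fun x hx => ?_⟩
  · change ψ {z | r z x} = ψ {z | r z y}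
    congr 1
    ext z
    exact ⟨fun h => r.trans h hxy, fun h => r.trans h (r.symm hxy)⟩
  · change ψ {z | r z x} = ψ {z | r z x₀}
    rw [hψball _ (r.mem_classes x) ⟨x, r.refl x, hx⟩,
      hψball _ (r.mem_classes x₀) ⟨x₀, r.refl x₀, mem_closedBall_self hR⟩]

lemma AsdimLE.exists_coarser_setoid [Nonempty X] {n : ℕ} (h : AsdimLE X n) {r : Setoid X}
    (hr : UniformlyBounded r.classes) (x₀ : X) {s R : ℝ} (hs : 0 ≤ s) (hR : 0 ≤ R) :
    ∃ r' : Setoid X, r ≤ r' ∧ UniformlyBounded r'.classes ∧ MultLE r'.classes s (n + 1) ∧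
      ∀ x ∈ closedBall x₀ R, r' x x₀ := by
  obtain ⟨m, hm⟩ := hr
  have hm₀ := le_max_right m 0
  obtain ⟨𝒱, ⟨M, hM⟩, hleb, hmult⟩ :=
    h.exists_cover_lebesgueGE_multLE (s := s + 2 * (R + max m 0)) (by positivity)
  obtain ⟨Φ, hΦ𝒱, hΦmem, hle, hΦball⟩ :=
    (hleb.mono (by linarith)).exists_coarsening_map (hm.mono (le_max_left m 0)) hm₀ hR x₀
  exact ⟨Setoid.ker Φ, hle, ⟨M, meshLE_classes_ker hΦ𝒱 hΦmem hM⟩,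
    multLE_classes_ker hΦ𝒱 hΦmem (hmult.mono (by linarith)), hΦball⟩

end Coarsening

lemma AsdimLE.exists_isPrecode {X : Type*} [PseudoMetricSpace X] [Nonempty X] {n : ℕ}
    (h : AsdimLE X n) : ∃ 𝒰 : ℕ → Set (Set X), IsPrecode 𝒰 (n + 1) := by
  obtain ⟨x₀⟩ := ‹Nonempty X›
  let S := {r : Setoid X // UniformlyBounded r.classes}
  have step : ∀ (r : S) (i : ℕ), ∃ r' : S, r.1 ≤ r'.1 ∧ MultLE r'.1.classes i (n + 1) ∧
      ∀ x ∈ closedBall x₀ i, r'.1 x x₀ := fun r i => by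
    obtain ⟨r', hle, hub, hmult, hball⟩ :=
      h.exists_coarser_setoid r.2 x₀ i.cast_nonneg i.cast_nonneg
    exact ⟨⟨r', hub⟩, hle, hmult, hball⟩
  choose next hle hmult hball using step
  let seq : ℕ → S := fun i => Nat.rec ⟨⊥, uniformlyBounded_classes_bot⟩ (fun i r => next r i) i
  refine ⟨fun i => (seq i).1.classes, fun i => Setoid.sUnion_classes _, fun i => (seq i).2,
    fun i _ hU => Setoid.existsUnique_superset_mem_classes (hle (seq i) i) hU, ?_, ?_⟩
  · intro D hD
    obtain ⟨R, hR⟩ := hD.subset_closedBall x₀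
    obtain ⟨i, hi⟩ := exists_nat_ge R
    exact ⟨i + 1, _, Setoid.mem_classes _ x₀,
      fun x hx => hball (seq i) i x (closedBall_subset_closedBall hi (hR hx))⟩
  · intro s
    obtain ⟨i, hi⟩ := exists_nat_ge s
    exact ⟨i + 1, (hmult (seq i) i).mono hi⟩

lemma isPrecode_of_isEmpty {X : Type*} [PseudoMetricSpace X] [IsEmpty X] (m : ℕ) :
    IsPrecode (fun _ => ({∅} : Set (Set X))) m :=
  ⟨fun _ => Subsingleton.elim _ _,
    fun _ => ⟨0, fun _ _ => ediam_le_of_forall_dist_le fun x _ => isEmptyElim x⟩,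
    fun _ U _ => ⟨∅, by simp [Subsingleton.elim U ∅]⟩,
    fun D _ => ⟨0, ∅, rfl, by simp [Subsingleton.elim D ∅]⟩,
    fun _ => ⟨0, fun B _ => by simp [Subsingleton.elim B ∅]⟩⟩

/-- if `asdim X ≤ n` then `X` admits an `(n+1)`-precode structure for
asymptotic dimension. -/
theorem statement13 {X : Type*} [MetricSpace X] (n : ℕ) (h : AsdimLE X n) :
    ∃ 𝒰 : ℕ → Set (Set X),
      (∀ i, IsCover (𝒰 i)) ∧ (∀ i, UniformlyBounded (𝒰 i)) ∧
      (∀ i, ∀ U ∈ 𝒰 i, ∃! V, V ∈ 𝒰 (i + 1) ∧ U ⊆ V) ∧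
      (∀ D : Set X, Bornology.IsBounded D → ∃ i, ∃ U ∈ 𝒰 i, D ⊆ U) ∧
      (∀ r : ℝ, ∃ i, MultLE (𝒰 i) r (n + 1)) := by
  rcases isEmpty_or_nonempty X with hX | hX
  · exact ⟨_, isPrecode_of_isEmpty (n + 1)⟩
  · exact h.exists_isPrecode
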